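/- Let M be a compact metric space, V : M → ℝ continuous, C ⊆ M a subset, x ∈ M, and U ⊆ M an open set with x ∈ U and with closure(U) ∩ C = {x}. Let w : ℝ → M be continuous such that V ∘ w is monotone non-decreasing, every point of the ω-limit set of w belongs to C, and there exists t₀ ∈ ℝ with w(t₀) ∈ U and V(w(t₀)) > V(y) for every y in the topological frontier of U. Then w(t) → x as t → ∞. -/

import Mathlib

/-!
Since `V ∘ w` never drops below `V (w t₀)`, which exceeds `V` on the frontier of `U`, the
connected curve `w '' [t₀, ∞)` cannot cross that frontier and stays in `U`. Every cluster point of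
`w` at `∞` therefore lies in `closure U`, and it is an ω-limit point, so it lies in `C`; hence it
is `x`. In a compact space a map with a unique cluster point converges to it.
-/

open Filter Topology

/-- The ω-limit set of a function `w : ℝ → M`: points `p` for which there is a strictly
increasing sequence `t n → ∞` with `w (t n) → p`. -/
def omegaLimitSet {M : Type*} [MetricSpace M] (w : ℝ → M) : Set M :=
  {p | ∃ t : ℕ → ℝ, StrictMono t ∧ Tendsto t atTop atTop ∧
    Tendsto (fun n => w (t n)) atTop (𝓝 p)}

theorem mem_omegaLimitSet_of_mapClusterPt {M : Type*} [MetricSpace M] {w : ℝ → M} {p : M}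
    (hp : MapClusterPt p atTop w) : p ∈ omegaLimitSet w := by
  have : (atTop ⊓ comap w (𝓝 p)).NeBot := by
    rw [← map_neBot_iff w, Filter.push_pull, inf_comm]
    exact hp
  obtain ⟨t, ht⟩ := exists_seq_tendsto (atTop ⊓ comap w (𝓝 p))
  rw [tendsto_inf, tendsto_comap_iff] at ht
  obtain ⟨φ, hφ, htφ⟩ := strictMono_subseq_of_tendsto_atTop ht.1
  exact ⟨t ∘ φ, htφ, ht.1.comp hφ.tendsto_atTop, ht.2.comp hφ.tendsto_atTop⟩

theorem mapsTo_Ici_of_lt_on_frontier {X β : Type*} [TopologicalSpace X] [Preorder β]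
    {V : X → β} {U : Set X} (hU : IsOpen U) {w : ℝ → X} (hw : Continuous w)
    (hmono : Monotone (V ∘ w)) {t₀ : ℝ} (ht₀ : w t₀ ∈ U)
    (hfront : ∀ y ∈ frontier U, V y < V (w t₀)) :
    Set.MapsTo w (Set.Ici t₀) U := by
  refine Set.mapsTo_iff_image_subset.2 <|
    (isPreconnected_Ici.image w hw.continuousOn).subset_of_closure_inter_subset hU
      ⟨w t₀, ⟨t₀, Set.self_mem_Ici, rfl⟩, ht₀⟩ ?_
  rintro _ ⟨hclos, s, hs, rfl⟩
  by_contra hsU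
  have hsfront : w s ∈ frontier U := by
    rw [frontier, hU.interior_eq]
    exact ⟨hclos, hsU⟩
  exact (hfront _ hsfront).not_ge (hmono hs)

theorem stmt_17_general {M : Type*} [MetricSpace M] [CompactSpace M]
    (V : M → ℝ)
    (C : Set M) (x : M) (U : Set M) (hU : IsOpen U)
    (hclos : closure U ∩ C = {x})
    (w : ℝ → M) (hw : Continuous w)
    (hmono : Monotone (V ∘ w))
    (homega : omegaLimitSet w ⊆ C)
    (t₀ : ℝ) (ht₀ : w t₀ ∈ U)
    (hfront : ∀ y ∈ frontier U, V y < V (w t₀)) :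
    Tendsto w atTop (𝓝 x) := by
  have hstay : ∀ᶠ t in atTop, w t ∈ closure U :=
    eventually_atTop.2 ⟨t₀, fun _ hs =>
      subset_closure (mapsTo_Ici_of_lt_on_frontier hU hw hmono ht₀ hfront hs)⟩
  refine tendsto_nhds_of_unique_mapClusterPt fun p hp => ?_
  exact hclos.subset
    ⟨isClosed_closure.mem_of_mapClusterPt hp hstay, homega (mem_omegaLimitSet_of_mapClusterPt hp)⟩

/-- Abstract attractivity lemma: in a compact metric space, if `V ∘ w` is non-decreasing,
every ω-limit point of `w` lies in `C`, `closure U ∩ C = {x}` for an open `U ∋ x`, and at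
some time `t₀` the curve is in `U` with `V (w t₀)` larger than `V` on the frontier of `U`,
then `w t → x` as `t → ∞`. -/
theorem stmt_17 {M : Type*} [MetricSpace M] [CompactSpace M]
    (V : M → ℝ) (hV : Continuous V)
    (C : Set M) (x : M) (U : Set M) (hU : IsOpen U) (hxU : x ∈ U)
    (hclos : closure U ∩ C = {x})
    (w : ℝ → M) (hw : Continuous w)
    (hmono : Monotone (V ∘ w))
    (homega : omegaLimitSet w ⊆ C)
    (t₀ : ℝ) (ht₀ : w t₀ ∈ U)
    (hfront : ∀ y ∈ frontier U, V y < V (w t₀)) :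
    Tendsto w atTop (𝓝 x) :=
  stmt_17_general V C x U hU hclos w hw hmono homega t₀ ht₀ hfront
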